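/- Let X and Y be Banach spaces and let L be a locally compact Hausdorff space. If the pair (X,Y) has the generalized AHSP and every bounded linear operator from X into C_0(L,Y) is compact, then the pair (X, C_0(L,Y)) has the generalized AHSP. -/

import Mathlib

/-!
Pick a point `t₀` at which the norm of `∑ αₖ Tₖ xₖ` is almost attained. Evaluation at `t₀`
turns the `Tₖ` into contractions `X → Y`; normalizing them, and discarding by a Markov
inequality the indices where `‖Tₖ xₖ (t₀)‖` is far from `1`, the AHSP of `(X, Y)` yields
`S'ₖ`, `zₖ` and `y*`. Since `Tₖ` is compact, the functions `Tₖ x`, `‖x‖ ≤ 1`, are equicontinuous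
at `t₀`; with a Urysohn function `φ` equal to `1` at `t₀` and supported where their
oscillation is small, `Sₖ = (1 - φ) Tₖ + φ S'ₖ` satisfies `Sₖ x (t₀) = S'ₖ x`,
`‖Sₖ‖ ≤ 1` and `‖Sₖ - Tₖ‖ ≤ ‖S'ₖ - Tₖ(·)(t₀)‖ + δ`, and `y* ∘ δ_{t₀}` is the functional.
-/

open ZeroAtInfty

/-- The generalized approximate hyperplane series property for a pair `(X, Y)`. -/
def GenAHSP (𝕜 X Y : Type*) [RCLike 𝕜] [NormedAddCommGroup X] [NormedSpace 𝕜 X]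
    [NormedAddCommGroup Y] [NormedSpace 𝕜 Y] : Prop :=
  ∀ ε > (0 : ℝ), ∃ η : ℝ, 0 < η ∧ η < ε ∧
    ∀ (T : ℕ → X →L[𝕜] Y) (x : ℕ → X) (α : ℕ → ℝ),
      (∀ k, ‖T k‖ = 1) → (∀ k, ‖x k‖ = 1) → (∀ k, 0 ≤ α k) → HasSum α 1 →
      ‖∑' k, ((α k : 𝕜) • T k (x k))‖ > 1 - η →
      ∃ (A : Set ℕ) (y : Y →L[𝕜] 𝕜) (S : ℕ → X →L[𝕜] Y) (z : ℕ → X),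
        ‖y‖ = 1 ∧ (∀ k, ‖S k‖ = 1) ∧ (∀ k, ‖z k‖ = 1) ∧
        (∑' k : A, α k) > 1 - ε ∧
        (∀ k ∈ A, ‖z k - x k‖ < ε ∧ ‖S k - T k‖ < ε) ∧
        (∀ k ∈ A, y (S k (z k)) = 1)

theorem exists_norm_eq_one_norm_sub_le (𝕜 : Type*) {E : Type*} [RCLike 𝕜]
    [NormedAddCommGroup E] [NormedSpace 𝕜 E] [Nontrivial E] {v : E} (hv : ‖v‖ ≤ 1) :
    ∃ u : E, ‖u‖ = 1 ∧ ‖u - v‖ ≤ 1 - ‖v‖ := by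
  rcases eq_or_ne v 0 with rfl | hv0
  · obtain ⟨w, hw⟩ := exists_ne (0 : E)
    exact ⟨(‖w‖⁻¹ : 𝕜) • w, norm_smul_inv_norm hw, by simp [norm_smul_inv_norm hw]⟩
  refine ⟨(‖v‖⁻¹ : 𝕜) • v, norm_smul_inv_norm hv0, ?_⟩
  have hpos : 0 < ‖v‖ := norm_pos_iff.2 hv0
  have hsub : (‖v‖⁻¹ : 𝕜) • v - v = ((‖v‖⁻¹ - 1 : ℝ) : 𝕜) • v := by
    rw [RCLike.ofReal_sub, RCLike.ofReal_one, sub_smul, one_smul, RCLike.ofReal_inv]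
  rw [hsub, norm_smul, RCLike.norm_ofReal, abs_of_nonneg (by simp [one_le_inv₀ hpos, hv]),
    sub_mul, inv_mul_cancel₀ hpos.ne', one_mul]

theorem norm_add_ofReal_smul_sub_le {𝕜 E : Type*} [RCLike 𝕜] [NormedAddCommGroup E]
    [NormedSpace 𝕜 E] {s : ℝ} (hs : s ∈ Set.Icc (0 : ℝ) 1) (a b : E) :
    ‖a + (s : 𝕜) • (b - a)‖ ≤ max ‖a‖ ‖b‖ := by
  have hconv : a + (s : 𝕜) • (b - a) = ((1 - s : ℝ) : 𝕜) • a + (s : 𝕜) • b := by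
    rw [RCLike.ofReal_sub, RCLike.ofReal_one, smul_sub, sub_smul, one_smul]; abel
  rw [hconv]
  refine (norm_add_le _ _).trans ?_
  simp only [norm_smul, RCLike.norm_ofReal, abs_of_nonneg hs.1,
    abs_of_nonneg (sub_nonneg.2 hs.2)]
  nlinarith [le_max_left ‖a‖ ‖b‖, le_max_right ‖a‖ ‖b‖, hs.1, hs.2]

section ConvexSeries

variable {ι 𝕜 E : Type*} [RCLike 𝕜] [NormedAddCommGroup E] [NormedSpace 𝕜 E]
  {α : ι → ℝ}

theorem summable_ofReal_smul_of_norm_le_one [CompleteSpace E] (hα0 : ∀ i, 0 ≤ α i)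
    (hα : Summable α) {v : ι → E} (hv : ∀ i, ‖v i‖ ≤ 1) : Summable fun i ↦ (α i : 𝕜) • v i :=
  .of_norm_bounded hα fun i ↦ by
    simpa [norm_smul, abs_of_nonneg (hα0 i)] using mul_le_of_le_one_right (hα0 i) (hv i)

theorem norm_tsum_ofReal_smul_sub_le [CompleteSpace E] (hα0 : ∀ i, 0 ≤ α i) (hα : Summable α)
    {u v : ι → E} (hu : ∀ i, ‖u i‖ ≤ 1) (hv : ∀ i, ‖v i‖ ≤ 1) {g : ι → ℝ}
    (hg : ∀ i, ‖u i - v i‖ ≤ g i) (hαg : Summable fun i ↦ α i * g i) :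
    ‖∑' i, (α i : 𝕜) • u i - ∑' i, (α i : 𝕜) • v i‖ ≤ ∑' i, α i * g i := by
  have hnorm (i : ι) : ‖(α i : 𝕜) • (u i - v i)‖ ≤ α i * g i := by
    simpa [norm_smul, abs_of_nonneg (hα0 i)] using mul_le_mul_of_nonneg_left (hg i) (hα0 i)
  rw [← (summable_ofReal_smul_of_norm_le_one hα0 hα hu).tsum_sub
    (summable_ofReal_smul_of_norm_le_one hα0 hα hv)]
  simp_rw [← smul_sub]
  exact (norm_tsum_le_tsum_norm (hαg.of_nonneg_of_le (fun _ ↦ norm_nonneg _) hnorm)).trans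
    ((hαg.of_nonneg_of_le (fun _ ↦ norm_nonneg _) hnorm).tsum_le_tsum hnorm hαg)

theorem summable_mul_one_sub_norm (hα0 : ∀ i, 0 ≤ α i) (hα : Summable α) {v : ι → E}
    (hv : ∀ i, ‖v i‖ ≤ 1) : Summable fun i ↦ α i * (1 - ‖v i‖) :=
  hα.of_nonneg_of_le (fun i ↦ mul_nonneg (hα0 i) (by linarith [hv i]))
    (fun i ↦ mul_le_of_le_one_right (hα0 i) (by linarith [norm_nonneg (v i)]))

theorem tsum_mul_one_sub_norm_le (hα0 : ∀ i, 0 ≤ α i) (hα : HasSum α 1)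
    {v : ι → E} (hv : ∀ i, ‖v i‖ ≤ 1) :
    ∑' i, α i * (1 - ‖v i‖) ≤ 1 - ‖∑' i, (α i : 𝕜) • v i‖ := by
  have hsum : Summable fun i ↦ α i * ‖v i‖ :=
    .of_nonneg_of_le (fun i ↦ mul_nonneg (hα0 i) (norm_nonneg _))
      (fun i ↦ mul_le_of_le_one_right (hα0 i) (hv i)) hα.summable
  have hnorm : ‖∑' i, (α i : 𝕜) • v i‖ ≤ ∑' i, α i * ‖v i‖ := by
    refine (norm_tsum_le_tsum_norm ?_).trans_eq (tsum_congr fun i ↦ ?_) <;>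
      simp [norm_smul, abs_of_nonneg (hα0 _), hsum]
  simp_rw [mul_one_sub]
  rw [hα.summable.tsum_sub hsum, hα.tsum_eq]
  linarith

theorem mul_tsum_setOf_le_le_tsum_mul (hα0 : ∀ i, 0 ≤ α i) (hα : Summable α) {g : ι → ℝ}
    (hg : ∀ i, 0 ≤ g i) (hαg : Summable fun i ↦ α i * g i) (r : ℝ) :
    r * ∑' i : {i | r ≤ g i}, α i ≤ ∑' i, α i * g i := by
  rw [tsum_subtype, ← tsum_mul_left]
  refine (hα.indicator _).mul_left r |>.tsum_le_tsum (fun i ↦ ?_) hαg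
  by_cases hi : r ≤ g i
  · simpa [Set.indicator_of_mem (show i ∈ {i | r ≤ g i} from hi), mul_comm] using
      mul_le_mul_of_nonneg_left hi (hα0 i)
  · simpa [Set.indicator_of_notMem (show i ∉ {i | r ≤ g i} from hi)] using
      mul_nonneg (hα0 i) (hg i)

theorem tsum_subtype_le_tsum_diff_add_tsum (hα0 : ∀ i, 0 ≤ α i) (hα : Summable α)
    (A C : Set ι) : ∑' i : A, α i ≤ ∑' i : ↥(A \ C), α i + ∑' i : C, α i := by
  simp only [tsum_subtype]
  rw [← (hα.indicator _).tsum_add (hα.indicator _)]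
  refine (hα.indicator _).tsum_le_tsum (fun i ↦ ?_) ((hα.indicator _).add (hα.indicator _))
  by_cases hA : i ∈ A <;> by_cases hC : i ∈ C <;> simp [Set.indicator, hA, hC, hα0 i]

end ConvexSeries

theorem exists_norm_eq_one_tsum_ge {ι 𝕜 X Y : Type*} [RCLike 𝕜] [NormedAddCommGroup X]
    [NormedSpace 𝕜 X] [NormedAddCommGroup Y] [NormedSpace 𝕜 Y] [CompleteSpace Y]
    [Nontrivial (X →L[𝕜] Y)] {T : ι → X →L[𝕜] Y} (hT : ∀ k, ‖T k‖ ≤ 1) {x : ι → X}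
    (hx : ∀ k, ‖x k‖ = 1) {α : ι → ℝ} (hα0 : ∀ k, 0 ≤ α k) (hα : HasSum α 1) :
    ∃ Th : ι → X →L[𝕜] Y, (∀ k, ‖Th k‖ = 1) ∧ (∀ k, ‖Th k - T k‖ ≤ 1 - ‖T k‖) ∧
      2 * ‖∑' k, (α k : 𝕜) • T k (x k)‖ - 1 ≤ ‖∑' k, (α k : 𝕜) • Th k (x k)‖ := by
  choose Th hTh hThT using fun k ↦ exists_norm_eq_one_norm_sub_le 𝕜 (hT k)
  refine ⟨Th, hTh, hThT, ?_⟩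
  have hTx (k : ι) : ‖T k (x k)‖ ≤ 1 := (T k).unit_le_opNorm _ (hx k).le |>.trans (hT k)
  have hThx (k : ι) : ‖Th k (x k) - T k (x k)‖ ≤ 1 - ‖T k (x k)‖ :=
    calc ‖Th k (x k) - T k (x k)‖ = ‖(Th k - T k) (x k)‖ := rfl
      _ ≤ ‖Th k - T k‖ := (Th k - T k).unit_le_opNorm _ (hx k).le
      _ ≤ 1 - ‖T k‖ := hThT k
      _ ≤ 1 - ‖T k (x k)‖ := by linarith [(T k).unit_le_opNorm (x k) (hx k).le]
  have hclose := norm_tsum_ofReal_smul_sub_le (𝕜 := 𝕜) hα0 hα.summable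
    (fun k ↦ by simpa [hTh k] using (Th k).unit_le_opNorm _ (hx k).le) hTx hThx
    (summable_mul_one_sub_norm hα0 hα.summable hTx)
  have hdefect := tsum_mul_one_sub_norm_le (𝕜 := 𝕜) hα0 hα hTx
  have := norm_sub_norm_le (∑' k, (α k : 𝕜) • T k (x k)) (∑' k, (α k : 𝕜) • Th k (x k))
  rw [norm_sub_rev] at this
  linarith

theorem GenAHSP.exists_of_norm_le_one {𝕜 X Y : Type*} [RCLike 𝕜] [NormedAddCommGroup X]
    [NormedSpace 𝕜 X] [NormedAddCommGroup Y] [NormedSpace 𝕜 Y] [CompleteSpace Y]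
    (h : GenAHSP 𝕜 X Y) {ε : ℝ} (hε : 0 < ε) :
    ∃ η : ℝ, 0 < η ∧ η < ε ∧
      ∀ (T : ℕ → X →L[𝕜] Y) (x : ℕ → X) (α : ℕ → ℝ),
        (∀ k, ‖T k‖ ≤ 1) → (∀ k, ‖x k‖ = 1) → (∀ k, 0 ≤ α k) → HasSum α 1 →
        ‖∑' k, ((α k : 𝕜) • T k (x k))‖ > 1 - η →
        ∃ (A : Set ℕ) (y : Y →L[𝕜] 𝕜) (S : ℕ → X →L[𝕜] Y) (z : ℕ → X),
          ‖y‖ = 1 ∧ (∀ k, ‖S k‖ = 1) ∧ (∀ k, ‖z k‖ = 1) ∧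
          (∑' k : A, α k) > 1 - ε ∧
          (∀ k ∈ A, ‖z k - x k‖ < ε ∧ ‖S k - T k‖ < ε) ∧
          (∀ k ∈ A, y (S k (z k)) = 1) := by
  set δ := min ε 1 / 2
  have hδ : 0 < δ := by positivity
  have hδε : δ ≤ ε / 2 := by simp only [δ]; linarith [min_le_left ε 1]
  have hδ1 : δ ≤ 1 / 2 := by simp only [δ]; linarith [min_le_right ε 1]
  obtain ⟨η₀, hη₀, -, H⟩ := h δ hδ
  set r := min δ (η₀ / 2)
  have hr : 0 < r := by positivity
  have hrδ : r ≤ δ := min_le_left _ _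
  have hr2 : 2 * r ^ 2 ≤ η₀ := by nlinarith [min_le_right δ (η₀ / 2)]
  refine ⟨r ^ 2, by positivity, by nlinarith, fun T x α hT hx hα0 hα hbig ↦ ?_⟩
  have hTx (k : ℕ) : ‖T k (x k)‖ ≤ 1 := (T k).unit_le_opNorm _ (hx k).le |>.trans (hT k)
  have hdefect : ∑' k, α k * (1 - ‖T k (x k)‖) < r ^ 2 :=
    (tsum_mul_one_sub_norm_le (𝕜 := 𝕜) hα0 hα hTx).trans_lt (by linarith)
  have : Nontrivial (X →L[𝕜] Y) := by
    refine not_subsingleton_iff_nontrivial.1 fun _ ↦ ?_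
    simp only [Subsingleton.elim (T _) 0, zero_apply, smul_zero, tsum_zero, norm_zero] at hbig
    nlinarith
  obtain ⟨Th, hTh, hThT, hThbig⟩ := exists_norm_eq_one_tsum_ge hT hx hα0 hα
  obtain ⟨A, y, S, z, hy, hS, hz, hA, hclose, hyS⟩ :=
    H Th x α hTh hx hα0 hα (by linarith)
  -- The defect `∑ αₖ (1 - ‖Tₖ xₖ‖)` is below `r²`, so the indices where it is at least `r`
  -- carry mass below `r`.
  set C := {k | r ≤ 1 - ‖T k (x k)‖}
  have hC : ∑' k : C, α k < r := by
    have := mul_tsum_setOf_le_le_tsum_mul hα0 hα.summable (fun k ↦ by linarith [hTx k])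
      (summable_mul_one_sub_norm hα0 hα.summable hTx) r
    nlinarith
  refine ⟨A \ C, y, S, z, hy, hS, hz, ?_, fun k hk ↦ ⟨?_, ?_⟩, fun k hk ↦ hyS k hk.1⟩
  · linarith [tsum_subtype_le_tsum_diff_add_tsum hα0 hα.summable A C]
  · linarith [(hclose k hk.1).1]
  · have hkC : 1 - ‖T k (x k)‖ < r := not_le.1 hk.2
    calc ‖S k - T k‖ ≤ ‖S k - Th k‖ + ‖Th k - T k‖ := norm_sub_le_norm_sub_add_norm_sub _ _ _
      _ < δ + r := by linarith [(hclose k hk.1).2, hThT k, (T k).unit_le_opNorm (x k) (hx k).le]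
      _ ≤ ε := by linarith

namespace ZeroAtInftyContinuousMap

open Topology Set

variable {𝕜 X Y L : Type*} [RCLike 𝕜] [NormedAddCommGroup X] [NormedSpace 𝕜 X]
  [NormedAddCommGroup Y] [NormedSpace 𝕜 Y] [TopologicalSpace L]

theorem norm_apply_le (f : C₀(L, Y)) (t : L) : ‖f t‖ ≤ ‖f‖ :=
  norm_toBCF_eq_norm (f := f) ▸ f.toBCF.norm_coe_le_norm t

theorem norm_le {f : C₀(L, Y)} {M : ℝ} (hM : 0 ≤ M) : ‖f‖ ≤ M ↔ ∀ t, ‖f t‖ ≤ M :=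
  norm_toBCF_eq_norm (f := f) ▸ BoundedContinuousFunction.norm_le hM

theorem exists_lt_norm_apply {f : C₀(L, Y)} {c : ℝ} (hc : 0 ≤ c) (h : c < ‖f‖) :
    ∃ t, c < ‖f t‖ := by
  by_contra! H
  exact h.not_ge ((norm_le hc).2 H)

variable (𝕜) in
noncomputable def evalCLM (t : L) : C₀(L, Y) →L[𝕜] Y :=
  LinearMap.mkContinuous
    { toFun f := f t
      map_add' _ _ := rfl
      map_smul' _ _ := rfl } 1
    fun f ↦ by simpa using norm_apply_le f t

@[simp]
theorem evalCLM_apply (t : L) (f : C₀(L, Y)) : evalCLM 𝕜 t f = f t := rfl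

theorem norm_evalCLM_le (t : L) : ‖(evalCLM 𝕜 t : C₀(L, Y) →L[𝕜] Y)‖ ≤ 1 :=
  LinearMap.mkContinuous_norm_le _ zero_le_one _

theorem norm_evalCLM_comp_le (t : L) (T : X →L[𝕜] C₀(L, Y)) : ‖(evalCLM 𝕜 t).comp T‖ ≤ ‖T‖ :=
  (ContinuousLinearMap.opNorm_comp_le _ _).trans
    (mul_le_of_le_one_left (norm_nonneg _) (norm_evalCLM_le t))

theorem norm_comp_evalCLM_le (t : L) (y : Y →L[𝕜] 𝕜) :
    ‖y.comp (evalCLM 𝕜 t : C₀(L, Y) →L[𝕜] Y)‖ ≤ ‖y‖ :=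
  (ContinuousLinearMap.opNorm_comp_le _ _).trans
    (mul_le_of_le_one_right (norm_nonneg _) (norm_evalCLM_le t))

theorem _root_.IsCompact.eventually_forall_dist_apply_lt {K : Set C₀(L, Y)} (hK : IsCompact K)
    (t₀ : L) {δ : ℝ} (hδ : 0 < δ) : ∀ᶠ t in 𝓝 t₀, ∀ f ∈ K, dist (f t) (f t₀) < δ := by
  have heval : Continuous fun p : L × C₀(L, Y) ↦ p.2 p.1 :=
    continuous_eval.comp (isometry_toBCF.continuous.comp continuous_snd |>.prodMk continuous_fst)
  refine hK.eventually_forall_of_forall_eventually fun f _ ↦ ?_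
  have hcont : Continuous fun p : L × C₀(L, Y) ↦ dist (p.2 p.1) (p.2 t₀) :=
    heval.dist (heval.comp (continuous_const.prodMk continuous_snd))
  exact hcont.continuousAt.eventually_lt continuousAt_const (by simpa using hδ)

variable (𝕜) in
noncomputable def blend (φ : C(L, ℝ)) (hφ : HasCompactSupport φ) (f : C₀(L, Y)) (y : Y) :
    C₀(L, Y) where
  toFun t := f t + (φ t : 𝕜) • (y - f t)
  continuous_toFun := by fun_prop
  zero_at_infty' := by
    have : HasCompactSupport fun t ↦ (φ t : 𝕜) • (y - f t) :=
      (hφ.comp_left RCLike.ofReal_zero).smul_right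
    simpa using (zero_at_infty f).add this.is_zero_at_infty

@[simp]
theorem blend_apply (φ : C(L, ℝ)) (hφ : HasCompactSupport φ) (f : C₀(L, Y)) (y : Y) (t : L) :
    blend 𝕜 φ hφ f y t = f t + (φ t : 𝕜) • (y - f t) := rfl

noncomputable def blendCLM (T : X →L[𝕜] C₀(L, Y)) (S : X →L[𝕜] Y) (φ : C(L, ℝ))
    (hφ : HasCompactSupport φ) (hφ01 : ∀ t, φ t ∈ Icc (0 : ℝ) 1) : X →L[𝕜] C₀(L, Y) :=
  LinearMap.mkContinuous
    { toFun x := blend 𝕜 φ hφ (T x) (S x)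
      map_add' x x' := by ext t; simp only [blend_apply, map_add, coe_add, Pi.add_apply]; module
      map_smul' c x := by
        ext t; simp only [blend_apply, map_smul, coe_smul, Pi.smul_apply, RingHom.id_apply]
        module }
    (max ‖T‖ ‖S‖) fun x ↦ by
      refine (norm_le (by positivity)).2 fun t ↦ ?_
      refine (norm_add_ofReal_smul_sub_le (hφ01 t) _ _).trans ?_
      rw [max_mul_of_nonneg _ _ (norm_nonneg x)]
      exact max_le_max ((norm_apply_le _ t).trans (T.le_opNorm x)) (S.le_opNorm x)

@[simp]
theorem blendCLM_apply (T : X →L[𝕜] C₀(L, Y)) (S : X →L[𝕜] Y) (φ : C(L, ℝ))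
    (hφ : HasCompactSupport φ) (hφ01 : ∀ t, φ t ∈ Icc (0 : ℝ) 1) (x : X) :
    blendCLM T S φ hφ hφ01 x = blend 𝕜 φ hφ (T x) (S x) := rfl

theorem exists_evalCLM_comp_eq [LocallyCompactSpace L] [T2Space L] {T : X →L[𝕜] C₀(L, Y)}
    (hT : IsCompactOperator T) (t₀ : L) (S : X →L[𝕜] Y) {δ : ℝ} (hδ : 0 < δ) :
    ∃ S₀ : X →L[𝕜] C₀(L, Y), (evalCLM 𝕜 t₀).comp S₀ = S ∧ ‖S₀‖ ≤ max ‖T‖ ‖S‖ ∧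
      ‖S₀ - T‖ ≤ ‖S - (evalCLM 𝕜 t₀).comp T‖ + δ := by
  obtain ⟨V, hV, hVopen, ht₀V⟩ : ∃ V : Set L,
      (∀ t ∈ V, ∀ x ∈ Metric.closedBall (0 : X) 1, dist (T x t) (T x t₀) < δ) ∧
        IsOpen V ∧ t₀ ∈ V :=
    eventually_nhds_iff.1 <|
      ((hT.isCompact_closure_image_closedBall 1).eventually_forall_dist_apply_lt t₀ hδ).mono
        fun t ht x hx ↦ ht _ (subset_closure (mem_image_of_mem T hx))
  obtain ⟨φ, hφt₀, hφV, hφ, hφ01⟩ := exists_continuous_one_zero_of_isCompact isCompact_singleton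
    hVopen.isClosed_compl (disjoint_singleton_left.2 (not_not.2 ht₀V))
  refine ⟨blendCLM T S φ hφ hφ01, ?_, LinearMap.mkContinuous_norm_le _ (by positivity) _, ?_⟩
  · ext x
    simp [hφt₀ rfl]
  refine ContinuousLinearMap.opNorm_le_of_unit_norm (by positivity) fun x hx ↦
    (norm_le (by positivity)).2 fun t ↦ ?_
  have happly : (blendCLM T S φ hφ hφ01 - T) x t = (φ t : 𝕜) • (S x - T x t) := by simp
  rw [happly, norm_smul, RCLike.norm_ofReal, abs_of_nonneg (hφ01 t).1]
  by_cases ht : t ∈ V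
  · calc φ t * ‖S x - T x t‖ ≤ ‖S x - T x t‖ := mul_le_of_le_one_left (norm_nonneg _) (hφ01 t).2
      _ ≤ ‖S x - T x t₀‖ + ‖T x t₀ - T x t‖ := norm_sub_le_norm_sub_add_norm_sub _ _ _
      _ ≤ ‖S - (evalCLM 𝕜 t₀).comp T‖ + δ := by
        gcongr
        · simpa using (S - (evalCLM 𝕜 t₀).comp T).unit_le_opNorm x hx.le
        · rw [← dist_eq_norm, dist_comm]
          exact (hV t ht x (by simp [hx])).le
  · simp only [hφV ht, Pi.zero_apply, zero_mul]
    positivity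

end ZeroAtInftyContinuousMap

theorem ContinuousLinearMap.norm_eq_one_of_apply_eq_one {𝕜 E : Type*} [RCLike 𝕜]
    [NormedAddCommGroup E] [NormedSpace 𝕜 E] {f : E →L[𝕜] 𝕜} (hf : ‖f‖ ≤ 1) {v : E}
    (hv : ‖v‖ ≤ 1) (h : f v = 1) : ‖f‖ = 1 :=
  le_antisymm hf (by simpa [h] using f.unit_le_opNorm v hv)

open ZeroAtInftyContinuousMap

theorem genAHSP_C0_general (𝕜 X Y L : Type*) [RCLike 𝕜]
    [NormedAddCommGroup X] [NormedSpace 𝕜 X]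
    [NormedAddCommGroup Y] [NormedSpace 𝕜 Y] [CompleteSpace Y]
    [TopologicalSpace L] [LocallyCompactSpace L] [T2Space L]
    (h : GenAHSP 𝕜 X Y)
    (hcomp : ∀ T : X →L[𝕜] C₀(L, Y), IsCompactOperator T) :
    GenAHSP 𝕜 X C₀(L, Y) := by
  intro ε hε
  set δ := min ε 1 / 2
  have hδ : 0 < δ := by positivity
  have hδε : 2 * δ ≤ ε := by simp only [δ]; linarith [min_le_left ε 1]
  have hδ1 : δ ≤ 1 / 2 := by simp only [δ]; linarith [min_le_right ε 1]
  obtain ⟨η, hη, hηδ, H⟩ := h.exists_of_norm_le_one hδ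
  refine ⟨η, hη, by linarith, fun T x α hT hx hα0 hα hbig ↦ ?_⟩
  obtain ⟨t₀, ht₀⟩ := exists_lt_norm_apply (by linarith) hbig
  have hev : (∑' k, (α k : 𝕜) • T k (x k)) t₀ =
      ∑' k, (α k : 𝕜) • ((evalCLM 𝕜 t₀).comp (T k)) (x k) :=
    (evalCLM 𝕜 t₀).map_tsum (summable_ofReal_smul_of_norm_le_one hα0 hα.summable
      fun k ↦ by simpa [hT k, hx k] using (T k).le_opNorm (x k))
  obtain ⟨A, y, S, z, hy, hS, hz, hA, hclose, hyS⟩ :=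
    H (fun k ↦ (evalCLM 𝕜 t₀).comp (T k)) x α
      (fun k ↦ (norm_evalCLM_comp_le t₀ (T k)).trans (hT k).le) hx hα0 hα (hev ▸ ht₀)
  choose S₀ hS₀ev hS₀norm hS₀T using fun k ↦ exists_evalCLM_comp_eq (hcomp (T k)) t₀ (S k) hδ
  have hS₀ (k : ℕ) : ‖S₀ k‖ = 1 :=
    le_antisymm (by simpa [hT k, hS k] using hS₀norm k)
      (by simpa [hS₀ev k, hS k] using norm_evalCLM_comp_le t₀ (S₀ k))
  have hyS₀ (k : ℕ) (hk : k ∈ A) : (y.comp (evalCLM 𝕜 t₀)) (S₀ k (z k)) = 1 := by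
    simpa [← hS₀ev k] using hyS k hk
  obtain ⟨k₀, hk₀⟩ : A.Nonempty := by
    by_contra hA0
    rw [Set.not_nonempty_iff_eq_empty.1 hA0, tsum_empty] at hA
    linarith
  refine ⟨A, y.comp (evalCLM 𝕜 t₀), S₀, z, ?_, hS₀, hz, by linarith,
    fun k hk ↦ ⟨by linarith [(hclose k hk).1], by linarith [hS₀T k, (hclose k hk).2]⟩, hyS₀⟩
  exact ContinuousLinearMap.norm_eq_one_of_apply_eq_one (hy ▸ norm_comp_evalCLM_le t₀ y)
    (by simpa [hS₀ k₀, hz k₀] using (S₀ k₀).le_opNorm (z k₀)) (hyS₀ k₀ hk₀)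

theorem genAHSP_C0 (𝕜 X Y L : Type*) [RCLike 𝕜]
    [NormedAddCommGroup X] [NormedSpace 𝕜 X] [CompleteSpace X]
    [NormedAddCommGroup Y] [NormedSpace 𝕜 Y] [CompleteSpace Y]
    [TopologicalSpace L] [LocallyCompactSpace L] [T2Space L] [Nonempty L]
    (h : GenAHSP 𝕜 X Y)
    (hcomp : ∀ T : X →L[𝕜] C₀(L, Y), IsCompactOperator T) :
    GenAHSP 𝕜 X C₀(L, Y) :=
  genAHSP_C0_general 𝕜 X Y L h hcomp
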